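/- For real a > 0 and b, the oscillatory sum (1/N)Σ_{j=1}^{N} e^{2πib√(1-(j/N)²)} converges as N → ∞ to ∫₀¹ e^{2πib√(1-y²)} dy, and this integral is O(1/√(|b|)) as |b| → ∞; more precisely |∫₀¹ e^{2πib√(1-y²)} dy| ≤ C/√(1+|b|) for an absolute constant C. -/

import Mathlib

/-!
The sum is a right-endpoint Riemann sum of a function continuous on `[0, 1]`, so it converges to
the integral by uniform continuity.

For the decay write `k = 2πb` and `φ y = √(1 - y ^ 2)`, whose only stationary point is `y = 0`.
On `[0, δ]` the integral of `e = exp (i k φ)` is at most `δ`. On `[δ, 1]` integrate by parts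
against `u = 1 / φ'`: since `(u e)' = u' e + i k e`, the quantity `|k| ‖∫ e‖` is bounded by the
boundary values of `u` plus its total variation, and `u` is monotone, so this is `≤ 2 / δ`.
Taking `δ = 1 / √(1 + |b|)` balances the two pieces.
-/

open Real Complex Filter intervalIntegral

open Set Topology

open MeasureTheory (volume)

section RiemannSum

variable {E : Type*} [NormedAddCommGroup E] [NormedSpace ℝ E] [CompleteSpace E]

theorem norm_smul_sub_integral_le {f : ℝ → E} {a b x ε : ℝ} (hab : a ≤ b)
    (hf : IntervalIntegrable f volume a b) (h : ∀ y ∈ Ioc a b, ‖f x - f y‖ ≤ ε) :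
    ‖(b - a) • f x - ∫ y in a..b, f y‖ ≤ ε * (b - a) := by
  rw [← integral_const, ← integral_sub intervalIntegrable_const hf,
    ← abs_of_nonneg (sub_nonneg.2 hab)]
  exact norm_integral_le_of_norm_le_const (by simpa only [uIoc_of_le hab] using h)

theorem tendsto_riemannSum_integral {f : ℝ → E} (hf : ContinuousOn f (Icc 0 1)) :
    Tendsto (fun N : ℕ => (N : ℝ)⁻¹ • ∑ j ∈ Finset.Icc 1 N, f (j / N)) atTop
      (𝓝 (∫ y in (0 : ℝ)..1, f y)) := by
  rw [Metric.tendsto_atTop]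
  intro ε hε
  obtain ⟨δ, hδ, hfδ⟩ := Metric.uniformContinuousOn_iff_le.1
    (isCompact_Icc.uniformContinuousOn_of_continuous hf) (ε / 2) (half_pos hε)
  obtain ⟨N₀, hN₀⟩ := exists_nat_gt δ⁻¹
  refine ⟨N₀, fun N hN => ?_⟩
  have hNpos : (0 : ℝ) < N := (inv_pos.2 hδ).trans (hN₀.trans_le (Nat.cast_le.2 hN))
  have hmesh : (N : ℝ)⁻¹ ≤ δ :=
    (inv_le_comm₀ hNpos hδ).2 (hN₀.trans_le (Nat.cast_le.2 hN)).le
  set t : ℕ → ℝ := fun k => k / N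
  have hcell : ∀ k, t (k + 1) - t k = (N : ℝ)⁻¹ := fun k => by
    simp only [t]; push_cast; field_simp; ring
  have ht : ∀ k < N, t k ∈ Icc 0 1 ∧ t (k + 1) ∈ Icc 0 1 := fun k hk => by
    have hk : (k : ℝ) + 1 ≤ N := by exact_mod_cast hk
    simp only [t, mem_Icc, div_le_one hNpos]; push_cast
    exact ⟨⟨by positivity, by linarith⟩, by positivity, hk⟩
  have hf_int : ∀ k < N, IntervalIntegrable f volume (t k) (t (k + 1)) :=
    fun k hk => (hf.mono (uIcc_subset_Icc (ht k hk).1 (ht k hk).2)).intervalIntegrable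
  have hsum : (N : ℝ)⁻¹ • ∑ j ∈ Finset.Icc 1 N, f (j / N)
      = ∑ k ∈ Finset.range N, (t (k + 1) - t k) • f (t (k + 1)) := by
    rw [Finset.smul_sum, Finset.range_eq_Ico, ← Finset.Ico_add_one_right_eq_Icc,
      ← Finset.sum_Ico_add' _ 0 N 1]
    simp only [hcell, t]
  have hint : ∫ y in (0 : ℝ)..1, f y = ∑ k ∈ Finset.range N, ∫ y in t k..t (k + 1), f y := by
    rw [sum_integral_adjacent_intervals hf_int]
    simp [t, hNpos.ne']
  have hterm : ∀ k ∈ Finset.range N,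
      ‖(t (k + 1) - t k) • f (t (k + 1)) - ∫ y in t k..t (k + 1), f y‖ ≤ ε / 2 * (N : ℝ)⁻¹ := by
    intro k hk
    rw [Finset.mem_range] at hk
    obtain ⟨htk, htk1⟩ := ht k hk
    rw [← hcell k]
    refine norm_smul_sub_integral_le (by linarith [hcell k, inv_pos.2 hNpos]) (hf_int k hk)
      fun y hy => ?_
    rw [← dist_eq_norm]
    refine hfδ _ htk1 _ ⟨htk.1.trans hy.1.le, hy.2.trans htk1.2⟩ ?_
    rw [Real.dist_eq, abs_of_nonneg (sub_nonneg.2 hy.2)]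
    linarith [hcell k, hy.1]
  calc dist _ _ ≤ ∑ k ∈ Finset.range N, ε / 2 * (N : ℝ)⁻¹ := by
        rw [dist_eq_norm, hsum, hint, ← Finset.sum_sub_distrib]
        exact (norm_sum_le _ _).trans (Finset.sum_le_sum hterm)
    _ = ε / 2 := by rw [Finset.sum_const, Finset.card_range, nsmul_eq_mul]; field_simp
    _ < ε := half_lt_self hε

end RiemannSum

theorem abs_mul_norm_integral_exp_le_of_inv_deriv {a b k : ℝ} {φ φ' u u' : ℝ → ℝ} (hab : a ≤ b)
    (hφ : ContinuousOn φ (Icc a b)) (hφ' : ∀ y ∈ Ioo a b, HasDerivAt φ (φ' y) y)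
    (hu : ContinuousOn u (Icc a b)) (hu' : ∀ y ∈ Ioo a b, HasDerivAt u (u' y) y)
    (hu'_int : IntervalIntegrable u' volume a b) (hinv : ∀ y ∈ Ioo a b, u y * φ' y = 1) :
    |k| * ‖∫ y in a..b, cexp ((k * φ y : ℝ) * I)‖ ≤ |u a| + |u b| + ∫ y in a..b, |u' y| := by
  set e : ℝ → ℂ := fun y => cexp ((k * φ y : ℝ) * I)
  have he_norm : ∀ y, ‖e y‖ = 1 := fun y => norm_exp_ofReal_mul_I _
  have he : ContinuousOn e (Icc a b) := by fun_prop
  have hue : ∀ y ∈ Ioo a b, HasDerivAt (fun y => u y • e y) (k * I * e y + u' y • e y) y := by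
    intro y hy
    have he' : HasDerivAt e (e y * ((k * φ' y : ℝ) * I)) y :=
      (((hφ' y hy).const_mul k).ofReal_comp.mul_const I).cexp
    refine ((hu' y hy).smul he').congr_deriv ?_
    have hinv' : (u y : ℂ) * φ' y = 1 := by exact_mod_cast hinv y hy
    simp only [Complex.real_smul]; push_cast
    linear_combination (k * I * e y) * hinv'
  have hu'e_int : IntervalIntegrable (fun y => u' y • e y) volume a b :=
    hu'_int.smul_continuousOn (by rwa [uIcc_of_le hab])
  have hibp : k * I * ∫ y in a..b, e y = u b • e b - u a • e a - ∫ y in a..b, u' y • e y := by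
    have he_int : IntervalIntegrable e volume a b := he.intervalIntegrable_of_Icc hab
    have hftc := integral_eq_sub_of_hasDerivAt_of_le hab (hu.smul he) hue
      ((he_int.const_mul _).add hu'e_int)
    rw [integral_add (he_int.const_mul _) hu'e_int, integral_const_mul] at hftc
    linear_combination hftc
  calc |k| * ‖∫ y in a..b, e y‖ = ‖k * I * ∫ y in a..b, e y‖ := by simp
    _ ≤ ‖u b • e b‖ + ‖u a • e a‖ + ‖∫ y in a..b, u' y • e y‖ := by
      rw [hibp]; exact norm_sub_le_of_le (norm_sub_le _ _) le_rfl
    _ ≤ |u a| + |u b| + ∫ y in a..b, |u' y| := by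
      have h := norm_integral_le_integral_norm (μ := volume) (f := fun y => u' y • e y) hab
      simp only [norm_smul, he_norm, Real.norm_eq_abs, mul_one] at h ⊢
      linarith

theorem hasDerivAt_sqrt_one_sub_sq {y : ℝ} (hy : y ^ 2 < 1) :
    HasDerivAt (fun y => √(1 - y ^ 2)) (-y / √(1 - y ^ 2)) y := by
  have h := ((hasDerivAt_pow 2 y).const_sub 1).sqrt (sub_pos.2 hy).ne'
  convert h using 1
  norm_num
  field_simp

theorem hasDerivAt_neg_sqrt_one_sub_sq_div {y : ℝ} (hy0 : 0 < y) (hy1 : y < 1) :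
    HasDerivAt (fun y => -(√(1 - y ^ 2) / y)) (1 / √(1 - y ^ 2) + √(1 - y ^ 2) / y ^ 2) y := by
  have hy : y ^ 2 < 1 := by nlinarith
  have hs : 0 < √(1 - y ^ 2) := Real.sqrt_pos.2 (sub_pos.2 hy)
  refine ((hasDerivAt_sqrt_one_sub_sq hy).div (hasDerivAt_id' y) hy0.ne').neg.congr_deriv ?_
  field_simp
  rw [Real.sq_sqrt (sub_pos.2 hy).le]
  ring

theorem abs_mul_norm_integral_exp_sqrt_tail_le {k δ : ℝ} (hδ : 0 < δ) (hδ1 : δ ≤ 1) :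
    |k| * ‖∫ y in δ..1, cexp ((k * √(1 - y ^ 2) : ℝ) * I)‖ ≤ 2 / δ := by
  -- `u = 1 / φ'` extends continuously to `y = 1` (with `u 1 = 0`) and is increasing.
  set u : ℝ → ℝ := fun y => -(√(1 - y ^ 2) / y)
  set u' : ℝ → ℝ := fun y => 1 / √(1 - y ^ 2) + √(1 - y ^ 2) / y ^ 2
  have hmem : ∀ y ∈ Ioo δ 1, 0 < y ∧ y < 1 := fun y hy => ⟨hδ.trans hy.1, hy.2⟩
  have hu : ContinuousOn u (Icc δ 1) := by
    refine (ContinuousOn.div (by fun_prop) continuousOn_id fun y hy => ?_).neg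
    exact (hδ.trans_le hy.1).ne'
  have hu' : ∀ y ∈ Ioo δ 1, HasDerivAt u (u' y) y := fun y hy =>
    hasDerivAt_neg_sqrt_one_sub_sq_div (hmem y hy).1 (hmem y hy).2
  have hu'_nonneg : ∀ y, 0 ≤ u' y := fun y => by positivity
  have hu'_int : IntervalIntegrable u' volume δ 1 :=
    (intervalIntegrable_iff_integrableOn_Ioc_of_le hδ1).2
      (integrableOn_deriv_of_nonneg hu hu' fun y _ => hu'_nonneg y)
  have hvar : ∫ y in δ..1, |u' y| = u 1 - u δ := by
    simp only [abs_of_nonneg (hu'_nonneg _)]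
    exact integral_eq_sub_of_hasDerivAt_of_le hδ1 hu hu' hu'_int
  have hinv : ∀ y ∈ Ioo δ 1, u y * (-y / √(1 - y ^ 2)) = 1 := fun y hy => by
    obtain ⟨hy0, hy1⟩ := hmem y hy
    have hs : 0 < √(1 - y ^ 2) := Real.sqrt_pos.2 (by nlinarith)
    simp only [u]
    field_simp
  have hsq : ∀ y ∈ Ioo δ 1, y ^ 2 < 1 := fun y hy => by nlinarith [hmem y hy]
  have hbound := abs_mul_norm_integral_exp_le_of_inv_deriv (k := k) hδ1 (by fun_prop)
    (fun y hy => hasDerivAt_sqrt_one_sub_sq (hsq y hy)) hu hu' hu'_int hinv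
  have huδ : |u δ| ≤ 1 / δ := by
    simp only [u]
    rw [abs_neg, abs_of_nonneg (by positivity)]
    gcongr
    exact Real.sqrt_le_one.2 (by nlinarith)
  have hu1 : u 1 = 0 := by simp [u]
  rw [hvar, hu1, abs_zero] at hbound
  linarith [neg_le_abs (u δ), show 2 / δ = 2 * (1 / δ) by ring]

theorem norm_integral_exp_ofReal_mul_I_le (φ : ℝ → ℝ) (a b : ℝ) :
    ‖∫ y in a..b, cexp (φ y * I)‖ ≤ |b - a| :=
  (norm_integral_le_of_norm_le_const fun y _ => (norm_exp_ofReal_mul_I (φ y)).le).trans_eq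
    (one_mul _)

theorem abs_mul_norm_integral_exp_sqrt_le (k : ℝ) {δ : ℝ} (hδ : 0 < δ) (hδ1 : δ ≤ 1) :
    |k| * ‖∫ y in (0 : ℝ)..1, cexp ((k * √(1 - y ^ 2) : ℝ) * I)‖ ≤ |k| * δ + 2 / δ := by
  have hint : ∀ a b : ℝ,
      IntervalIntegrable (fun y => cexp ((k * √(1 - y ^ 2) : ℝ) * I)) volume a b :=
    fun a b => (by fun_prop : Continuous _).intervalIntegrable a b
  rw [← integral_add_adjacent_intervals (hint 0 δ) (hint δ 1)]
  have h0 := norm_integral_exp_ofReal_mul_I_le (fun y => k * √(1 - y ^ 2)) 0 δ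
  rw [sub_zero, abs_of_pos hδ] at h0
  calc _ ≤ |k| * ‖∫ y in (0 : ℝ)..δ, cexp ((k * √(1 - y ^ 2) : ℝ) * I)‖
        + |k| * ‖∫ y in δ..1, cexp ((k * √(1 - y ^ 2) : ℝ) * I)‖ := by
        rw [← mul_add]; gcongr; exact norm_add_le _ _
    _ ≤ |k| * δ + 2 / δ := by
        gcongr
        exact abs_mul_norm_integral_exp_sqrt_tail_le hδ hδ1

theorem norm_integral_exp_sqrt_le_two_div_sqrt (b : ℝ) :
    ‖∫ y in (0 : ℝ)..1, cexp (2 * π * I * b * √(1 - y ^ 2))‖ ≤ 2 / √(1 + |b|) := by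
  have hform : ∀ y : ℝ, cexp (2 * π * I * b * √(1 - y ^ 2))
      = cexp ((2 * π * b * √(1 - y ^ 2) : ℝ) * I) := fun y => by push_cast; ring_nf
  simp_rw [hform]
  set s := √(1 + |b|)
  have hs1 : 1 ≤ s := Real.one_le_sqrt.2 (by linarith [abs_nonneg b])
  have hs2 : s ^ 2 = 1 + |b| := Real.sq_sqrt (by positivity)
  rcases le_or_gt |b| 1 with hb | hb
  · have h1 := norm_integral_exp_ofReal_mul_I_le (fun y => 2 * π * b * √(1 - y ^ 2)) 0 1
    rw [sub_zero, abs_one] at h1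
    refine h1.trans ((le_div_iff₀ (by positivity)).2 ?_)
    nlinarith
  · have hs0 : 0 < s := by positivity
    have hK : |2 * π * b| = 2 * π * |b| := by
      rw [abs_mul, abs_mul, abs_of_pos pi_pos, abs_two]
    have hδ := abs_mul_norm_integral_exp_sqrt_le (2 * π * b) (inv_pos.2 hs0)
      (inv_le_one_of_one_le₀ hs1)
    rw [hK, div_inv_eq_mul] at hδ
    have hsK : 2 * s ^ 2 ≤ 2 * π * |b| := by nlinarith [pi_gt_three]
    have hxs := mul_le_mul_of_nonneg_right hδ hs0.le
    rw [add_mul, inv_mul_cancel_right₀ hs0.ne'] at hxs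
    rw [le_div_iff₀ hs0]
    refine le_of_mul_le_mul_left ?_ (by positivity : 0 < 2 * π * |b|)
    nlinarith

theorem oscillatory_sum_limit_and_decay_general :
    (∀ b : ℝ,
      Tendsto (fun N : ℕ =>
          (1 / (N : ℂ)) * ∑ j ∈ Finset.Icc 1 N,
            Complex.exp (2 * π * Complex.I * b * Real.sqrt (1 - ((j : ℝ) / N) ^ 2)))
        atTop
        (nhds (∫ y in (0:ℝ)..1,
          Complex.exp (2 * π * Complex.I * b * Real.sqrt (1 - y ^ 2))))) ∧
    (∃ C : ℝ, 0 < C ∧ ∀ b : ℝ,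
      ‖∫ y in (0:ℝ)..1, Complex.exp (2 * π * Complex.I * b * Real.sqrt (1 - y ^ 2))‖ ≤
        C / Real.sqrt (1 + |b|)) := by
  refine ⟨fun b => ?_, 2, two_pos, norm_integral_exp_sqrt_le_two_div_sqrt⟩
  have h := tendsto_riemannSum_integral
    (f := fun y : ℝ => cexp (2 * π * I * b * √(1 - y ^ 2))) (by fun_prop)
  simpa only [Complex.real_smul, one_div, ofReal_inv, ofReal_natCast] using h

theorem oscillatory_sum_limit_and_decay (a : ℝ) (ha : 0 < a) :
    (∀ b : ℝ,
      Tendsto (fun N : ℕ =>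
          (1 / (N : ℂ)) * ∑ j ∈ Finset.Icc 1 N,
            Complex.exp (2 * π * Complex.I * b * Real.sqrt (1 - ((j : ℝ) / N) ^ 2)))
        atTop
        (nhds (∫ y in (0:ℝ)..1,
          Complex.exp (2 * π * Complex.I * b * Real.sqrt (1 - y ^ 2))))) ∧
    (∃ C : ℝ, 0 < C ∧ ∀ b : ℝ,
      ‖∫ y in (0:ℝ)..1, Complex.exp (2 * π * Complex.I * b * Real.sqrt (1 - y ^ 2))‖ ≤
        C / Real.sqrt (1 + |b|)) :=
  oscillatory_sum_limit_and_decay_general
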